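/- arXiv:1311.3959 — 4 statements merged into one kernel-verified Lean document; each statement's English description precedes it below -/
import Mathlib

section
/- The function d_V(M1, M2) = max{V1* - V1^{π2*}, V2* - V2^{π1*}} on MDPs (where Vi* is the optimal value of MDP i at the initial state and Vi^π is the value of policy π in MDP i) fails the triangle inequality in general: there exist three MDPs M1, M2, M3 on a single state with three actions such that d_V(M1,M3) > d_V(M1,M2) + d_V(M2,M3). Concretely, with a single state, three actions a1,a2,a3, discount γ ∈ [0,1), and rewards R1(a1)=100, R1(a2)=90, R1(a3)=-100; R2(a2)=100, R2(a1)=R2(a3)=90; R3(a3)=100, R3(a1)=R3(a2)=90, one has d_V(M1,M2)=10/(1-γ), d_V(M2,M3)=10/(1-γ), d_V(M1,M3)=200/(1-γ). -/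
theorem eq_of_forall_le_apply_of_forall_ne_lt {A β : Type*} [Preorder β] {R : A → β} {a π : A}
    (hπ : ∀ b, R b ≤ R π) (ha : ∀ b ≠ a, R b < R a) : π = a := by
  by_contra hne
  exact lt_irrefl _ ((ha π hne).trans_le (hπ a))

theorem dV_not_metric_general (γ : ℝ) (hγ1 : γ < 1)
    (R1 R2 R3 : Fin 3 → ℝ)
    (h1 : R1 0 = 100 ∧ R1 1 = 90 ∧ R1 2 = -100)
    (h2 : R2 1 = 100 ∧ R2 0 = 90 ∧ R2 2 = 90)
    (h3 : R3 2 = 100 ∧ R3 0 = 90 ∧ R3 1 = 90)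
    (π1 π2 π3 : Fin 3)
    (hπ1 : ∀ a, R1 a ≤ R1 π1) (hπ2 : ∀ a, R2 a ≤ R2 π2) (hπ3 : ∀ a, R3 a ≤ R3 π3) :
    let V : (Fin 3 → ℝ) → Fin 3 → ℝ := fun R a => R a / (1 - γ)
    let dV : (Fin 3 → ℝ) → Fin 3 → (Fin 3 → ℝ) → Fin 3 → ℝ := fun R π R' π' =>
      max (V R π - V R π') (V R' π' - V R' π)
    dV R1 π1 R2 π2 = 10 / (1 - γ) ∧
    dV R2 π2 R3 π3 = 10 / (1 - γ) ∧
    dV R1 π1 R3 π3 = 200 / (1 - γ) ∧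
    dV R1 π1 R3 π3 > dV R1 π1 R2 π2 + dV R2 π2 R3 π3 := by
  intro V dV
  obtain ⟨h1a, h1b, h1c⟩ := h1
  obtain ⟨h2a, h2b, h2c⟩ := h2
  obtain ⟨h3a, h3b, h3c⟩ := h3
  obtain rfl : π1 = 0 :=
    eq_of_forall_le_apply_of_forall_ne_lt hπ1 (by norm_num [Fin.forall_fin_succ, h1a, h1b, h1c])
  obtain rfl : π2 = 1 :=
    eq_of_forall_le_apply_of_forall_ne_lt hπ2 (by norm_num [Fin.forall_fin_succ, h2a, h2b, h2c])
  obtain rfl : π3 = 2 :=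
    eq_of_forall_le_apply_of_forall_ne_lt hπ3 (by norm_num [Fin.forall_fin_succ, h3a, h3b, h3c])
  have hc : 0 < 1 - γ := sub_pos.2 hγ1
  have hdV : ∀ R π R' π', dV R π R' π' = max (R π - R π') (R' π' - R' π) / (1 - γ) :=
    fun _ _ _ _ => by simp only [dV, V, ← sub_div, max_div_div_right hc.le]
  have d12 : dV R1 0 R2 1 = 10 / (1 - γ) := by rw [hdV, h1a, h1b, h2a, h2b]; norm_num
  have d23 : dV R2 1 R3 2 = 10 / (1 - γ) := by rw [hdV, h2a, h2c, h3a, h3c]; norm_num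
  have d13 : dV R1 0 R3 2 = 200 / (1 - γ) := by rw [hdV, h1a, h1c, h3a, h3b]; norm_num
  refine ⟨d12, d23, d13, ?_⟩
  rw [d12, d23, d13, ← add_div]
  exact div_lt_div_of_pos_right (by norm_num) hc

/-- `d_V` fails the triangle inequality: concrete single-state counterexample. -/
theorem dV_not_metric (γ : ℝ) (hγ0 : 0 ≤ γ) (hγ1 : γ < 1)
    (R1 R2 R3 : Fin 3 → ℝ)
    (h1 : R1 0 = 100 ∧ R1 1 = 90 ∧ R1 2 = -100)
    (h2 : R2 1 = 100 ∧ R2 0 = 90 ∧ R2 2 = 90)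
    (h3 : R3 2 = 100 ∧ R3 0 = 90 ∧ R3 1 = 90)
    (π1 π2 π3 : Fin 3)
    (hπ1 : ∀ a, R1 a ≤ R1 π1) (hπ2 : ∀ a, R2 a ≤ R2 π2) (hπ3 : ∀ a, R3 a ≤ R3 π3) :
    let V : (Fin 3 → ℝ) → Fin 3 → ℝ := fun R a => R a / (1 - γ)
    let dV : (Fin 3 → ℝ) → Fin 3 → (Fin 3 → ℝ) → Fin 3 → ℝ := fun R π R' π' =>
      max (V R π - V R π') (V R' π' - V R' π)
    dV R1 π1 R2 π2 = 10 / (1 - γ) ∧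
    dV R2 π2 R3 π3 = 10 / (1 - γ) ∧
    dV R1 π1 R3 π3 = 200 / (1 - γ) ∧
    dV R1 π1 R3 π3 > dV R1 π1 R2 π2 + dV R2 π2 R3 π3 :=
  dV_not_metric_general γ hγ1 R1 R2 R3 h1 h2 h3 π1 π2 π3 hπ1 hπ2 hπ3
end

section
/- (Simulation lemma / value difference bound) Let M1 and M2 be two finite MDPs on the same state-action space with discount γ ∈ [0,1), rewards bounded by 0 ≤ R_i(s,a) ≤ R_max, and suppose for all (s,a): |R1(s,a) - R2(s,a)| ≤ ε1 and ‖P1(·|s,a) - P2(·|s,a)‖₁ ≤ ε2. Then for any stationary policy π and any state s, |V1^π(s) - V2^π(s)| ≤ (ε1 + γ R_max ε2)/(1-γ)². -/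
/-!
Work with the sup norm on `S → ℝ`. Subtracting the two Bellman equations gives
`V₁ - V₂ = (R₁ - R₂) + γ (P₁ - P₂) V₁ + γ P₂ (V₁ - V₂)`, so
`‖V₁ - V₂‖ ≤ ε₁ + γ ε₂ ‖V₁‖ + γ ‖V₁ - V₂‖`, while the Bellman equation for `V₁` alone gives
`‖V₁‖ ≤ R_max / (1 - γ)`. Solving both self-referential bounds yields the claim.
-/

open Finset

variable {S : Type*} [Fintype S]

lemma abs_sum_mul_le_sum_abs_mul_norm (p v : S → ℝ) :
    |∑ s, p s * v s| ≤ (∑ s, |p s|) * ‖v‖ :=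
  calc |∑ s, p s * v s| ≤ ∑ s, |p s * v s| := abs_sum_le_sum_abs _ _
    _ ≤ ∑ s, |p s| * ‖v‖ := sum_le_sum fun s _ => by
        rw [abs_mul, ← Real.norm_eq_abs (v s)]
        exact mul_le_mul_of_nonneg_left (norm_le_pi_norm v s) (abs_nonneg _)
    _ = (∑ s, |p s|) * ‖v‖ := (sum_mul _ _ _).symm

lemma abs_sum_mul_le_norm_of_stochastic {p : S → ℝ} (hp : ∀ s, 0 ≤ p s) (hp1 : ∑ s, p s = 1)
    (v : S → ℝ) : |∑ s, p s * v s| ≤ ‖v‖ := by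
  simpa [abs_of_nonneg (hp _), hp1] using abs_sum_mul_le_sum_abs_mul_norm p v

lemma norm_le_div_one_sub_of_abs_le_add_mul_norm [Nonempty S] {f : S → ℝ} {c γ : ℝ}
    (hγ : γ < 1) (h : ∀ t, |f t| ≤ c + γ * ‖f‖) : ‖f‖ ≤ c / (1 - γ) := by
  have hf : ‖f‖ ≤ c + γ * ‖f‖ := (pi_norm_le_iff_of_nonempty f).2 h
  rw [le_div_iff₀ (sub_pos.2 hγ)]
  linarith

section Bellman

variable {γ : ℝ} {P P₁ P₂ : S → S → ℝ} {R R₁ R₂ : S → ℝ} {V V₁ V₂ : S → ℝ}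

lemma norm_le_of_bellman [Nonempty S] (hγ0 : 0 ≤ γ) (hγ1 : γ < 1) (hP : ∀ s s', 0 ≤ P s s')
    (hP1 : ∀ s, ∑ s', P s s' = 1) {Rmax : ℝ} (hR : ∀ s, |R s| ≤ Rmax)
    (hV : ∀ s, V s = R s + γ * ∑ s', P s s' * V s') :
    ‖V‖ ≤ Rmax / (1 - γ) := by
  refine norm_le_div_one_sub_of_abs_le_add_mul_norm hγ1 fun t => ?_
  calc |V t| ≤ |R t| + γ * |∑ s', P t s' * V s'| := by
        rw [hV t, ← abs_of_nonneg hγ0, ← abs_mul, abs_of_nonneg hγ0]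
        exact abs_add_le _ _
    _ ≤ Rmax + γ * ‖V‖ := by
        gcongr
        · exact hR t
        · exact abs_sum_mul_le_norm_of_stochastic (hP t) (hP1 t) V

lemma sub_eq_of_bellman (hV₁ : ∀ s, V₁ s = R₁ s + γ * ∑ s', P₁ s s' * V₁ s')
    (hV₂ : ∀ s, V₂ s = R₂ s + γ * ∑ s', P₂ s s' * V₂ s') (t : S) :
    V₁ t - V₂ t = (R₁ t - R₂ t) + γ * ∑ s', (P₁ t s' - P₂ t s') * V₁ s'
      + γ * ∑ s', P₂ t s' * (V₁ - V₂) s' := by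
  have hsum : ∑ s', (P₁ t s' - P₂ t s') * V₁ s' + ∑ s', P₂ t s' * (V₁ - V₂) s'
      = ∑ s', P₁ t s' * V₁ s' - ∑ s', P₂ t s' * V₂ s' := by
    rw [← sum_add_distrib, ← sum_sub_distrib]
    exact sum_congr rfl fun s' _ => by simp only [Pi.sub_apply]; ring
  rw [hV₁ t, hV₂ t]
  linear_combination -γ * hsum

lemma norm_sub_le_of_bellman [Nonempty S] (hγ0 : 0 ≤ γ) (hγ1 : γ < 1) (hP₂ : ∀ s s', 0 ≤ P₂ s s')
    (hP₂1 : ∀ s, ∑ s', P₂ s s' = 1) {ε₁ ε₂ : ℝ} (hεR : ∀ s, |R₁ s - R₂ s| ≤ ε₁)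
    (hεP : ∀ s, ∑ s', |P₁ s s' - P₂ s s'| ≤ ε₂)
    (hV₁ : ∀ s, V₁ s = R₁ s + γ * ∑ s', P₁ s s' * V₁ s')
    (hV₂ : ∀ s, V₂ s = R₂ s + γ * ∑ s', P₂ s s' * V₂ s') :
    ‖V₁ - V₂‖ ≤ (ε₁ + γ * (ε₂ * ‖V₁‖)) / (1 - γ) := by
  refine norm_le_div_one_sub_of_abs_le_add_mul_norm hγ1 fun t => ?_
  calc |(V₁ - V₂) t|
      ≤ |R₁ t - R₂ t| + γ * |∑ s', (P₁ t s' - P₂ t s') * V₁ s'|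
        + γ * |∑ s', P₂ t s' * (V₁ - V₂) s'| := by
        rw [Pi.sub_apply, sub_eq_of_bellman hV₁ hV₂ t, ← abs_of_nonneg hγ0, ← abs_mul, ← abs_mul,
          abs_of_nonneg hγ0]
        exact (abs_add_le _ _).trans (add_le_add_left (abs_add_le _ _) _)
    _ ≤ ε₁ + γ * (ε₂ * ‖V₁‖) + γ * ‖V₁ - V₂‖ := by
        gcongr
        · exact hεR t
        · exact (abs_sum_mul_le_sum_abs_mul_norm _ V₁).trans
            (mul_le_mul_of_nonneg_right (hεP t) (norm_nonneg _))
        · exact abs_sum_mul_le_norm_of_stochastic (hP₂ t) (hP₂1 t) _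

end Bellman

theorem simulation_lemma_general {S A : Type} [Fintype S] (γ Rmax ε1 ε2 : ℝ)
    (hγ0 : 0 ≤ γ) (hγ1 : γ < 1)
    (P1 P2 : S → A → S → ℝ) (R1 R2 : S → A → ℝ) (π : S → A)
    (hP1 : ∀ s a, (∀ s', 0 ≤ P1 s a s') ∧ ∑ s', P1 s a s' = 1)
    (hP2 : ∀ s a, (∀ s', 0 ≤ P2 s a s') ∧ ∑ s', P2 s a s' = 1)
    (hR1 : ∀ s a, 0 ≤ R1 s a ∧ R1 s a ≤ Rmax)
    (hεR : ∀ s a, |R1 s a - R2 s a| ≤ ε1)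
    (hεP : ∀ s a, ∑ s', |P1 s a s' - P2 s a s'| ≤ ε2)
    (V1 V2 : S → ℝ)
    (hV1 : ∀ s, V1 s = R1 s (π s) + γ * ∑ s', P1 s (π s) s' * V1 s')
    (hV2 : ∀ s, V2 s = R2 s (π s) + γ * ∑ s', P2 s (π s) s' * V2 s') :
    ∀ s, |V1 s - V2 s| ≤ (ε1 + γ * Rmax * ε2) / (1 - γ) ^ 2 := by
  intro s
  have : Nonempty S := ⟨s⟩
  have hε1 : 0 ≤ ε1 := (abs_nonneg _).trans (hεR s (π s))
  have hε2 : 0 ≤ ε2 := (sum_nonneg fun _ _ => abs_nonneg _).trans (hεP s (π s))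
  have h1γ : 0 < 1 - γ := sub_pos.2 hγ1
  have hV1_le : ‖V1‖ ≤ Rmax / (1 - γ) :=
    norm_le_of_bellman hγ0 hγ1 (fun t => (hP1 t (π t)).1) (fun t => (hP1 t (π t)).2)
      (fun t => (abs_of_nonneg (hR1 t (π t)).1).trans_le (hR1 t (π t)).2) hV1
  have hdiff := norm_sub_le_of_bellman hγ0 hγ1 (fun t => (hP2 t (π t)).1)
    (fun t => (hP2 t (π t)).2) (fun t => hεR t (π t)) (fun t => hεP t (π t)) hV1 hV2
  calc |V1 s - V2 s| = ‖(V1 - V2) s‖ := (Real.norm_eq_abs _).symm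
    _ ≤ ‖V1 - V2‖ := norm_le_pi_norm _ s
    _ ≤ (ε1 + γ * (ε2 * (Rmax / (1 - γ)))) / (1 - γ) := hdiff.trans (by gcongr)
    _ = (ε1 * (1 - γ) + γ * Rmax * ε2) / (1 - γ) ^ 2 := by field_simp
    _ ≤ (ε1 + γ * Rmax * ε2) / (1 - γ) ^ 2 := by
        gcongr
        exact mul_le_of_le_one_right hε1 (by linarith)

/-- Simulation lemma: closeness of rewards and transitions implies closeness of values. -/
theorem simulation_lemma {S A : Type} [Fintype S] (γ Rmax ε1 ε2 : ℝ)
    (hγ0 : 0 ≤ γ) (hγ1 : γ < 1)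
    (P1 P2 : S → A → S → ℝ) (R1 R2 : S → A → ℝ) (π : S → A)
    (hP1 : ∀ s a, (∀ s', 0 ≤ P1 s a s') ∧ ∑ s', P1 s a s' = 1)
    (hP2 : ∀ s a, (∀ s', 0 ≤ P2 s a s') ∧ ∑ s', P2 s a s' = 1)
    (hR1 : ∀ s a, 0 ≤ R1 s a ∧ R1 s a ≤ Rmax)
    (hR2 : ∀ s a, 0 ≤ R2 s a ∧ R2 s a ≤ Rmax)
    (hεR : ∀ s a, |R1 s a - R2 s a| ≤ ε1)
    (hεP : ∀ s a, ∑ s', |P1 s a s' - P2 s a s'| ≤ ε2)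
    (V1 V2 : S → ℝ)
    (hV1 : ∀ s, V1 s = R1 s (π s) + γ * ∑ s', P1 s (π s) s' * V1 s')
    (hV2 : ∀ s, V2 s = R2 s (π s) + γ * ∑ s', P2 s (π s) s' * V2 s') :
    ∀ s, |V1 s - V2 s| ≤ (ε1 + γ * Rmax * ε2) / (1 - γ) ^ 2 :=
  simulation_lemma_general γ Rmax ε1 ε2 hγ0 hγ1 P1 P2 R1 R2 π hP1 hP2 hR1 hεR hεP V1 V2 hV1 hV2
end

section
/- (Doeblin-type convergence rate) Let P be a transition matrix on a finite state space X with stationary distribution Π, and suppose there exist D ∈ ℕ and δ > 0 such that P^D(x,x') ≥ δ Π(x') for all x, x'. Then for every initial state x₀ and every n, the total variation distance satisfies ‖P^n(x₀, ·) − Π‖_TV ≤ (1−δ)^{⌊n/D⌋}. -/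
/-!
Write `μₘ = Pᵐ(x₀, ·)`. Since `∑ (μₘ - Π) = 0`, the matrix `Pᴰ` acts on `μₘ - Π` as the
nonnegative residual kernel `Pᴰ(x, x') - δΠ(x')`, whose rows sum to `1 - δ`; so every block of
`D` steps contracts the `ℓ¹` distance to `Π` by `1 - δ`, starting from a distance of at most `2`.
-/

open Finset Matrix

section Doeblin

variable {X : Type*} [Fintype X]

lemma vecMul_pow_eq_self_of_vecMul_eq_self {R : Type*} [Semiring R] [DecidableEq X]
    {M : Matrix X X R} {v : X → R} (hv : v ᵥ* M = v) (n : ℕ) : v ᵥ* M ^ n = v := by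
  induction n with
  | zero => simp
  | succ n ih => rw [pow_succ, ← vecMul_vecMul, ih, hv]

lemma sum_abs_sub_le_two {μ ν : X → ℝ} (hμ0 : ∀ x, 0 ≤ μ x) (hν0 : ∀ x, 0 ≤ ν x)
    (hμ1 : ∑ x, μ x = 1) (hν1 : ∑ x, ν x = 1) : ∑ x, |μ x - ν x| ≤ 2 :=
  calc ∑ x, |μ x - ν x| ≤ ∑ x, (μ x + ν x) := sum_le_sum fun x _ => by
        rw [abs_sub_le_iff]; constructor <;> linarith [hμ0 x, hν0 x]
    _ = 2 := by rw [sum_add_distrib, hμ1, hν1]; norm_num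

section Minorization

variable {Q : Matrix X X ℝ} {π : X → ℝ} {δ : ℝ}
  (hQ : ∀ x, ∑ x', Q x x' = 1) (hπ : ∑ x, π x = 1) (hmin : ∀ x x', δ * π x' ≤ Q x x')
include hQ hπ hmin

lemma le_one_of_minorization : δ ≤ 1 := by
  obtain ⟨x, -⟩ := nonempty_of_sum_ne_zero (hπ.trans_ne one_ne_zero)
  calc δ = ∑ x', δ * π x' := by rw [← mul_sum, hπ, mul_one]
    _ ≤ ∑ x', Q x x' := sum_le_sum fun x' _ => hmin x x'
    _ = 1 := hQ x

lemma sum_abs_vecMul_le_of_minorization {v : X → ℝ} (hv : ∑ x, v x = 0) :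
    ∑ x', |(v ᵥ* Q) x'| ≤ (1 - δ) * ∑ x, |v x| := by
  have hresidual : ∀ x', (v ᵥ* Q) x' = ∑ x, v x * (Q x x' - δ * π x') := fun x' => by
    simp only [vecMul, dotProduct, mul_sub, sum_sub_distrib, ← sum_mul, hv, zero_mul, sub_zero]
  have hresidual_row : ∀ x, ∑ x', (Q x x' - δ * π x') = 1 - δ := fun x => by
    rw [sum_sub_distrib, hQ, ← mul_sum, hπ, mul_one]
  calc ∑ x', |(v ᵥ* Q) x'|
      ≤ ∑ x', ∑ x, |v x| * (Q x x' - δ * π x') := sum_le_sum fun x' _ => by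
        rw [hresidual]
        refine (abs_sum_le_sum_abs _ _).trans_eq (sum_congr rfl fun x _ => ?_)
        rw [abs_mul, abs_of_nonneg (sub_nonneg.2 (hmin x x'))]
    _ = ∑ x, |v x| * ∑ x', (Q x x' - δ * π x') := by rw [sum_comm]; simp_rw [mul_sum]
    _ = (1 - δ) * ∑ x, |v x| := by simp_rw [hresidual_row]; rw [← sum_mul, mul_comm]

end Minorization

end Doeblin

lemma le_pow_mul_of_forall_add_le_mul {a : ℕ → ℝ} {c : ℝ} {D : ℕ} (hc : 0 ≤ c)
    (ha : ∀ m, a (m + D) ≤ c * a m) (m q : ℕ) : a (m + D * q) ≤ c ^ q * a m := by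
  induction q with
  | zero => simp
  | succ q ih =>
    calc a (m + D * (q + 1)) = a (m + D * q + D) := by rw [mul_add_one, add_assoc]
      _ ≤ c * a (m + D * q) := ha _
      _ ≤ c * (c ^ q * a m) := mul_le_mul_of_nonneg_left ih hc
      _ = c ^ (q + 1) * a m := by ring

theorem doeblin_convergence_general {X : Type} [Fintype X] [DecidableEq X]
    (P : Matrix X X ℝ) (Pi : X → ℝ) (D : ℕ) (δ : ℝ)
    (hP0 : ∀ x x', 0 ≤ P x x') (hProw : ∀ x, ∑ x', P x x' = 1)
    (hPi0 : ∀ x, 0 ≤ Pi x) (hPi1 : ∑ x, Pi x = 1)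
    (hstat : ∀ x', ∑ x, Pi x * P x x' = Pi x')
    (hmin : ∀ x x', δ * Pi x' ≤ (P ^ D) x x') :
    ∀ (x₀ : X) (n : ℕ),
      (1 / 2) * ∑ x, |(P ^ n) x₀ x - Pi x| ≤ (1 - δ) ^ (n / D) := by
  intro x₀ n
  have hP : P ∈ rowStochastic ℝ X := mem_rowStochastic_iff_sum.2 ⟨hP0, hProw⟩
  have hrow m := sum_row_of_mem_rowStochastic (pow_mem hP m)
  have hPiD : Pi ᵥ* P ^ D = Pi := vecMul_pow_eq_self_of_vecMul_eq_self (funext hstat) D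
  have hstep m : ∑ x, |(P ^ (m + D)) x₀ x - Pi x| ≤ (1 - δ) * ∑ x, |(P ^ m) x₀ x - Pi x| := by
    have hmass : ∑ x, ((P ^ m) x₀ - Pi) x = 0 := by simp [sum_sub_distrib, hrow, hPi1]
    have := sum_abs_vecMul_le_of_minorization (hrow D) hPi1 hmin hmass
    rwa [sub_vecMul, hPiD, ← mul_apply_eq_vecMul, ← pow_add] at this
  have hcontr : 0 ≤ 1 - δ := sub_nonneg.2 (le_one_of_minorization (hrow D) hPi1 hmin)
  have hstart : ∑ x, |(P ^ (n % D)) x₀ x - Pi x| ≤ 2 :=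
    sum_abs_sub_le_two (fun x => nonneg_of_mem_rowStochastic (pow_mem hP _)) hPi0 (hrow _ x₀) hPi1
  calc (1 / 2) * ∑ x, |(P ^ n) x₀ x - Pi x|
      = (1 / 2) * ∑ x, |(P ^ (n % D + D * (n / D))) x₀ x - Pi x| := by rw [Nat.mod_add_div]
    _ ≤ (1 / 2) * ((1 - δ) ^ (n / D) * 2) := by
        gcongr
        exact (le_pow_mul_of_forall_add_le_mul (a := fun m => ∑ x, |(P ^ m) x₀ x - Pi x|)
          hcontr hstep _ _).trans (by gcongr)
    _ = (1 - δ) ^ (n / D) := by ring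

/-- Doeblin-type convergence rate: under the minorization `P^D(x,x') ≥ δΠ(x')`, the chain
converges to `Π` geometrically in total variation. -/
theorem doeblin_convergence {X : Type} [Fintype X] [DecidableEq X]
    (P : Matrix X X ℝ) (Pi : X → ℝ) (D : ℕ) (hD : 0 < D) (δ : ℝ) (hδ : 0 < δ)
    (hP0 : ∀ x x', 0 ≤ P x x') (hProw : ∀ x, ∑ x', P x x' = 1)
    (hPi0 : ∀ x, 0 ≤ Pi x) (hPi1 : ∑ x, Pi x = 1)
    (hstat : ∀ x', ∑ x, Pi x * P x x' = Pi x')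
    (hmin : ∀ x x', δ * Pi x' ≤ (P ^ D) x x') :
    ∀ (x₀ : X) (n : ℕ),
      (1 / 2) * ∑ x, |(P ^ n) x₀ x - Pi x| ≤ (1 - δ) ^ (n / D) :=
  doeblin_convergence_general P Pi D δ hP0 hProw hPi0 hPi1 hstat hmin
end

section
/- (NP-hardness gadget, clique-cover correspondence) Let G = (V, E) be a finite graph with |V| = M, and define single-state MDPs M_1,…,M_M on action set {1,…,M} with rewards R_i(a_i) = 0, R_i(a_j) = 0 if (i,j) ∈ E, and R_i(a_j) = −ε* otherwise (ε* > 0). Then d_V(M_i, M_j) = 0 if and only if (i,j) ∈ E or i = j, and d_V(M_i, M_j) = ε*/(1−γ) otherwise. Consequently, a partition of {M_1,…,M_M} into clusters of pairwise d_V-distance zero corresponds exactly to a partition of V into cliques of G. -/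
/-!
MDP `M_i` gives reward `0` to its own action and to the actions of its neighbours and `-ε*` to
every other action, so `M_i` and `M_j` lose nothing by swapping optimal actions exactly when
`i = j` or `i ~ j`, and otherwise each loses `ε*/(1-γ)`. Distance zero is therefore the reflexive
closure of adjacency, and clusters of pairwise distance zero are exactly the cliques of `G`.
-/

namespace SingleStateMDP

variable {ι : Type*}

/-- `V i a` is the value of action `a` in MDP `i`, whose optimal action is `a = i`. -/
def valueDist (V : ι → ι → ℝ) (i j : ι) : ℝ := max (V i i - V i j) (V j j - V j i)

/-- The gadget's value table, with `s` the reflexive closure of adjacency and `δ = ε*/(1-γ)`. -/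
def gadgetValue (s : ι → ι → Prop) [DecidableRel s] (δ : ℝ) (i a : ι) : ℝ :=
  if s i a then 0 else -δ

variable {s : ι → ι → Prop} [DecidableRel s] {δ : ℝ}

theorem valueDist_gadgetValue (hrefl : ∀ i, s i i) (hsymm : ∀ i j, s i j → s j i) (i j : ι) :
    valueDist (gadgetValue s δ) i j = if s i j then 0 else δ := by
  unfold valueDist gadgetValue
  by_cases h : s i j
  · simp [h, hsymm i j h, hrefl]
  · simp [h, mt (hsymm j i) h, hrefl]

theorem valueDist_gadgetValue_eq_zero_iff (hrefl : ∀ i, s i i) (hsymm : ∀ i j, s i j → s j i)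
    (hδ : 0 < δ) (i j : ι) : valueDist (gadgetValue s δ) i j = 0 ↔ s i j := by
  rw [valueDist_gadgetValue hrefl hsymm]
  split_ifs <;> simp [*, hδ.ne']

end SingleStateMDP

open SingleStateMDP

theorem clique_cover_gadget_general {M : ℕ} (G : SimpleGraph (Fin M)) [DecidableRel G.Adj]
    (γ εs : ℝ) (hγ1 : γ < 1) (hεs : 0 < εs) :
    let R : Fin M → Fin M → ℝ := fun i j => if i = j ∨ G.Adj i j then 0 else -εs
    let V : Fin M → Fin M → ℝ := fun i a => R i a / (1 - γ)
    let dV : Fin M → Fin M → ℝ := fun i j => max (V i i - V i j) (V j j - V j i)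
    (∀ i j, (dV i j = 0 ↔ (i = j ∨ G.Adj i j)) ∧
      (¬(i = j ∨ G.Adj i j) → dV i j = εs / (1 - γ))) ∧
    (∀ C : Finset (Fin M),
      (∀ i ∈ C, ∀ j ∈ C, dV i j = 0) ↔ (∀ i ∈ C, ∀ j ∈ C, i ≠ j → G.Adj i j)) := by
  intro R V dV
  have hrefl : ∀ i : Fin M, i = i ∨ G.Adj i i := fun _ => Or.inl rfl
  have hsymm : ∀ i j : Fin M, i = j ∨ G.Adj i j → j = i ∨ G.Adj j i :=
    fun _ _ => Or.imp Eq.symm G.adj_symm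
  have hδ : 0 < εs / (1 - γ) := div_pos hεs (sub_pos.2 hγ1)
  have hdV : dV = valueDist (gadgetValue (fun i j => i = j ∨ G.Adj i j) (εs / (1 - γ))) := by
    funext i j
    simp only [dV, V, R, valueDist, gadgetValue, ite_div, zero_div, neg_div]
  have hzero : ∀ i j, dV i j = 0 ↔ i = j ∨ G.Adj i j := by
    rw [hdV]; exact valueDist_gadgetValue_eq_zero_iff hrefl hsymm hδ
  refine ⟨fun i j => ⟨hzero i j, fun h => ?_⟩, fun C => ?_⟩
  · rw [hdV, valueDist_gadgetValue hrefl hsymm, if_neg h]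
  · simp only [hzero, or_iff_not_imp_left]

/-- Clique-cover gadget: for the single-state MDPs built from a graph `G`, `d_V` vanishes
exactly on edges (and the diagonal), equals `ε*/(1-γ)` otherwise, and hence clusters of
pairwise `d_V`-distance zero correspond exactly to cliques of `G`. -/
theorem clique_cover_gadget {M : ℕ} (G : SimpleGraph (Fin M)) [DecidableRel G.Adj]
    (γ εs : ℝ) (hγ0 : 0 ≤ γ) (hγ1 : γ < 1) (hεs : 0 < εs) :
    let R : Fin M → Fin M → ℝ := fun i j => if i = j ∨ G.Adj i j then 0 else -εs
    let V : Fin M → Fin M → ℝ := fun i a => R i a / (1 - γ)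
    let dV : Fin M → Fin M → ℝ := fun i j => max (V i i - V i j) (V j j - V j i)
    (∀ i j, (dV i j = 0 ↔ (i = j ∨ G.Adj i j)) ∧
      (¬(i = j ∨ G.Adj i j) → dV i j = εs / (1 - γ))) ∧
    (∀ C : Finset (Fin M),
      (∀ i ∈ C, ∀ j ∈ C, dV i j = 0) ↔ (∀ i ∈ C, ∀ j ∈ C, i ≠ j → G.Adj i j)) :=
  clique_cover_gadget_general G γ εs hγ1 hεs
end
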